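/- Let E = (E,+,',0,1) be a lattice effect algebra with induced order ≤ and define x→y := y+(x∨y)' for all x,y ∈ E. Then (E,→,0) is a lattice effect implication algebra, i.e. it satisfies all twelve conditions (i)–(xii) in the definition of lattice effect implication algebra; moreover x ≤ y iff x→y = 1, x∨y = (x→y)→y, and x∧y = (x'∨y')'. -/
import Mathlib


/-- An effect algebra `(E,+,',0,1)`.  The partial addition is encoded by a total
function `add` together with a definedness predicate `D`; the axioms only
constrain `add` on defined pairs. -/
structure EffectAlgebra (E : Type*) where
  /-- definedness predicate for the partial addition -/
  D : E → E → Prop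
  /-- the (partial) addition -/
  add : E → E → E
  /-- the complementation `x ↦ x'` -/
  compl : E → E
  zero : E
  one : E
  /-- (E1) -/
  comm_def : ∀ {a b : E}, D a b → D b a
  comm : ∀ {a b : E}, D a b → add a b = add b a
  /-- (E2): `(a+b)+c` is defined iff `a+(b+c)` is defined -/
  assoc_def : ∀ a b c : E, (D a b ∧ D (add a b) c) ↔ (D b c ∧ D a (add b c))
  assoc : ∀ a b c : E, D a b → D (add a b) c → add (add a b) c = add a (add b c)
  /-- (E3): `a + b` is defined and equals `1` iff `b = a'` -/
  orth : ∀ a b : E, (D a b ∧ add a b = one) ↔ b = compl a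
  /-- (E4) -/
  one_add : ∀ a : E, D one a → a = zero

/-- The induced order of an effect algebra: `a ≤ b` iff `a + c = b` for some `c`. -/
def EffectAlgebra.le {E : Type*} (A : EffectAlgebra E) (a b : E) : Prop :=
  ∃ c, A.D a c ∧ A.add a c = b

namespace EffectAlgebra

variable {E : Type*} (A : EffectAlgebra E)

lemma D_compl (a : E) : A.D a (A.compl a) := ((A.orth a (A.compl a)).mpr rfl).1

lemma add_compl (a : E) : A.add a (A.compl a) = A.one := ((A.orth a (A.compl a)).mpr rfl).2

lemma compl_compl (a : E) : A.compl (A.compl a) = a := by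
  have h1 := A.comm_def (A.D_compl a)
  have h2 : A.add (A.compl a) a = A.one := by rw [A.comm h1, A.add_compl]
  exact ((A.orth (A.compl a) a).mp ⟨h1, h2⟩).symm

lemma cancel {a b c : E} (hab : A.D a b) (hac : A.D a c) (h : A.add a b = A.add a c) :
    b = c := by
  have hD1 : A.D (A.add a b) (A.compl (A.add a b)) := A.D_compl _
  have hba : A.D b a := A.comm_def hab
  have h1 : A.D (A.add b a) (A.compl (A.add a b)) := by rw [A.comm hba]; exact hD1
  obtain ⟨hae, hb⟩ := (A.assoc_def b a (A.compl (A.add a b))).mp ⟨hba, h1⟩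
  have hb1 : A.add b (A.add a (A.compl (A.add a b))) = A.one := by
    rw [← A.assoc b a _ hba h1, A.comm hba, A.add_compl]
  have hca : A.D c a := A.comm_def hac
  have h2 : A.D (A.add c a) (A.compl (A.add a b)) := by rw [A.comm hca, ← h]; exact hD1
  obtain ⟨_, hc⟩ := (A.assoc_def c a (A.compl (A.add a b))).mp ⟨hca, h2⟩
  have hc1 : A.add c (A.add a (A.compl (A.add a b))) = A.one := by
    rw [← A.assoc c a _ hca h2, A.comm hca, ← h, A.add_compl]
  have hb' : A.add a (A.compl (A.add a b)) = A.compl b := (A.orth b _).mp ⟨hb, hb1⟩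
  have hc' : A.add a (A.compl (A.add a b)) = A.compl c := (A.orth c _).mp ⟨hc, hc1⟩
  have hbc : A.compl b = A.compl c := hb'.symm.trans hc'
  calc b = A.compl (A.compl b) := (A.compl_compl b).symm
    _ = A.compl (A.compl c) := by rw [hbc]
    _ = c := A.compl_compl c

lemma compl_one : A.compl A.one = A.zero := A.one_add _ (A.D_compl A.one)

lemma compl_zero : A.compl A.zero = A.one := by rw [← A.compl_one, A.compl_compl]

lemma D_zero_one : A.D A.zero A.one := ((A.orth A.zero A.one).mpr A.compl_zero.symm).1

lemma add_zero_one : A.add A.zero A.one = A.one :=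
  ((A.orth A.zero A.one).mpr A.compl_zero.symm).2

lemma D_one_zero : A.D A.one A.zero := A.comm_def A.D_zero_one

lemma add_one_zero : A.add A.one A.zero = A.one := by
  rw [A.comm A.D_one_zero, A.add_zero_one]

lemma add_zero_aux (a : E) :
    A.D (A.compl a) A.zero ∧ A.add (A.compl a) A.zero = A.compl a := by
  have h1 : A.D (A.add a (A.compl a)) A.zero := by rw [A.add_compl]; exact A.D_one_zero
  obtain ⟨h2, h3⟩ := (A.assoc_def a (A.compl a) A.zero).mp ⟨A.D_compl a, h1⟩
  have h4 : A.add a (A.add (A.compl a) A.zero) = A.one := by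
    rw [← A.assoc a (A.compl a) A.zero (A.D_compl a) h1, A.add_compl, A.add_one_zero]
  exact ⟨h2, (A.orth a _).mp ⟨h3, h4⟩⟩

lemma D_zero (a : E) : A.D a A.zero := by
  have h := (A.add_zero_aux (A.compl a)).1; rwa [A.compl_compl] at h

lemma add_zero (a : E) : A.add a A.zero = a := by
  have h := (A.add_zero_aux (A.compl a)).2; rwa [A.compl_compl] at h

lemma zero_add (a : E) : A.add A.zero a = a := by
  rw [A.comm (A.comm_def (A.D_zero a)), A.add_zero]

lemma le_refl (a : E) : A.le a a := ⟨A.zero, A.D_zero a, A.add_zero a⟩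

lemma zero_le (a : E) : A.le A.zero a := ⟨a, A.comm_def (A.D_zero a), A.zero_add a⟩

lemma le_one (a : E) : A.le a A.one := ⟨A.compl a, A.D_compl a, A.add_compl a⟩

lemma le_trans {a b c : E} (h1 : A.le a b) (h2 : A.le b c) : A.le a c := by
  obtain ⟨u, hu, hu'⟩ := h1; obtain ⟨v, hv, hv'⟩ := h2
  rw [← hu'] at hv hv'
  obtain ⟨h3, h4⟩ := (A.assoc_def a u v).mp ⟨hu, hv⟩
  exact ⟨A.add u v, h4, by rw [← A.assoc a u v hu hv, hv']⟩

lemma add_eq_zero {a b : E} (h : A.D a b) (h0 : A.add a b = A.zero) :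
    a = A.zero ∧ b = A.zero := by
  have h1 : A.D (A.add a b) A.one := by rw [h0]; exact A.D_zero_one
  obtain ⟨h2, h3⟩ := (A.assoc_def a b A.one).mp ⟨h, h1⟩
  have hb : b = A.zero := A.one_add b (A.comm_def h2)
  subst hb
  rw [A.add_zero] at h0
  exact ⟨h0, rfl⟩

lemma le_antisymm {a b : E} (h1 : A.le a b) (h2 : A.le b a) : a = b := by
  obtain ⟨u, hu, hu'⟩ := h1; obtain ⟨v, hv, hv'⟩ := h2
  rw [← hu'] at hv hv'
  obtain ⟨h3, h4⟩ := (A.assoc_def a u v).mp ⟨hu, hv⟩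
  have he : A.add a (A.add u v) = A.add a A.zero := by
    rw [← A.assoc a u v hu hv, hv', A.add_zero]
  have huv : A.add u v = A.zero := A.cancel h4 (A.D_zero a) he
  have hu0 : u = A.zero := (A.add_eq_zero h3 huv).1
  rw [← hu', hu0, A.add_zero]

lemma compl_le_compl {a b : E} (h : A.le a b) : A.le (A.compl b) (A.compl a) := by
  obtain ⟨c, hc, hc'⟩ := h
  have hb : A.D (A.add a c) (A.compl b) := by rw [hc']; exact A.D_compl b
  obtain ⟨h1, h2⟩ := (A.assoc_def a c (A.compl b)).mp ⟨hc, hb⟩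
  have h3 : A.add a (A.add c (A.compl b)) = A.one := by
    rw [← A.assoc a c (A.compl b) hc hb, hc', A.add_compl]
  have h4 : A.add c (A.compl b) = A.compl a := (A.orth a _).mp ⟨h2, h3⟩
  exact ⟨c, A.comm_def h1, by rw [A.comm (A.comm_def h1), h4]⟩

lemma mono {a b c : E} (hab : A.D a b) (hcb : A.le c b) :
    A.D a c ∧ A.le (A.add a c) (A.add a b) := by
  obtain ⟨d, hd, hd'⟩ := hcb
  rw [← hd'] at hab
  have h1 : A.D (A.add c d) a := A.comm_def hab
  obtain ⟨h2, h3⟩ := (A.assoc_def c d a).mp ⟨hd, h1⟩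
  obtain ⟨h4, h5⟩ := (A.assoc_def d a c).mp ⟨h2, A.comm_def h3⟩
  have hac : A.D a c := h4
  have h6 : A.D (A.add a c) d := A.comm_def h5
  refine ⟨hac, ⟨d, h6, ?_⟩⟩
  rw [A.assoc a c d hac h6, hd']

lemma D_iff_le_compl {a b : E} : A.D a b ↔ A.le a (A.compl b) := by
  constructor
  · intro h
    have h1 : A.D (A.add a b) (A.compl (A.add a b)) := A.D_compl _
    obtain ⟨h2, h3⟩ := (A.assoc_def a b (A.compl (A.add a b))).mp ⟨h, h1⟩
    have h4 : A.add a (A.add b (A.compl (A.add a b))) = A.one := by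
      rw [← A.assoc a b _ h h1, A.add_compl]
    have h5 : A.add b (A.compl (A.add a b)) = A.compl a := (A.orth a _).mp ⟨h3, h4⟩
    have h6 : A.le b (A.compl a) := ⟨_, h2, h5⟩
    have h7 := A.compl_le_compl h6
    rwa [A.compl_compl] at h7
  · intro h
    exact A.comm_def (A.mono (A.D_compl b) h).1

lemma imp_aux {y s : E} (h : A.le y s) :
    A.D y (A.compl s) ∧ A.add y (A.compl (A.add y (A.compl s))) = s := by
  obtain ⟨t, ht, ht'⟩ := h
  have h1 : A.D (A.add y t) (A.compl s) := by rw [ht']; exact A.D_compl s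
  obtain ⟨h2, h3⟩ := (A.assoc_def y t (A.compl s)).mp ⟨ht, h1⟩
  have h4 : A.add y (A.add t (A.compl s)) = A.one := by
    rw [← A.assoc y t _ ht h1, ht', A.add_compl]
  have h5 : A.add t (A.compl s) = A.compl y := (A.orth y _).mp ⟨h3, h4⟩
  have h6 : A.D (A.compl s) t := A.comm_def h2
  have h7 : A.D y (A.add (A.compl s) t) := by
    rw [A.comm h6, h5]; exact A.D_compl y
  obtain ⟨h8, h9⟩ := (A.assoc_def y (A.compl s) t).mpr ⟨h6, h7⟩
  have h10 : A.add (A.add y (A.compl s)) t = A.one := by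
    rw [A.assoc y _ t h8 h9, A.comm h6, h5, A.add_compl]
  have h11 : t = A.compl (A.add y (A.compl s)) := (A.orth _ t).mp ⟨h9, h10⟩
  exact ⟨h8, by rw [← h11, ht']⟩

end EffectAlgebra

/-- A lattice effect algebra: an effect algebra whose induced order is a lattice. -/
structure LatticeEffectAlgebra (E : Type*) extends EffectAlgebra E where
  sup : E → E → E
  inf : E → E → E
  le_sup_left : ∀ a b : E, toEffectAlgebra.le a (sup a b)
  le_sup_right : ∀ a b : E, toEffectAlgebra.le b (sup a b)
  sup_le : ∀ a b c : E, toEffectAlgebra.le a c → toEffectAlgebra.le b c →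
    toEffectAlgebra.le (sup a b) c
  inf_le_left : ∀ a b : E, toEffectAlgebra.le (inf a b) a
  inf_le_right : ∀ a b : E, toEffectAlgebra.le (inf a b) b
  le_inf : ∀ a b c : E, toEffectAlgebra.le c a → toEffectAlgebra.le c b →
    toEffectAlgebra.le c (inf a b)

/-- The natural implication `x → y := y + (x ∨ y)'` of a lattice effect algebra.
(The sum is always defined since `(x ∨ y)' ≤ y'`.) -/
def LatticeEffectAlgebra.imp {E : Type*} (L : LatticeEffectAlgebra E) (x y : E) : E :=
  L.add y (L.compl (L.sup x y))

namespace LatticeEffectAlgebra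

variable {E : Type*} (L : LatticeEffectAlgebra E)

lemma sup_eq_right {x y : E} (h : L.toEffectAlgebra.le x y) : L.sup x y = y :=
  L.toEffectAlgebra.le_antisymm (L.sup_le x y y h (L.toEffectAlgebra.le_refl y))
    (L.le_sup_right x y)

lemma sup_eq_left {x y : E} (h : L.toEffectAlgebra.le y x) : L.sup x y = x :=
  L.toEffectAlgebra.le_antisymm (L.sup_le x y x (L.toEffectAlgebra.le_refl x) h)
    (L.le_sup_left x y)

lemma imp_def' (x y : E) : L.imp x y = L.add y (L.compl (L.sup x y)) := rfl

lemma D_imp (x y : E) : L.D y (L.compl (L.sup x y)) :=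
  L.toEffectAlgebra.D_iff_le_compl.mpr
    (by rw [L.toEffectAlgebra.compl_compl]; exact L.le_sup_right x y)

lemma imp_eq_one_iff (x y : E) : L.imp x y = L.one ↔ L.toEffectAlgebra.le x y := by
  constructor
  · intro h
    have h1 : L.compl (L.sup x y) = L.compl y :=
      (L.toEffectAlgebra.orth y _).mp ⟨L.D_imp x y, h⟩
    have h2 : L.sup x y = y := by
      have h3 := congrArg L.compl h1
      rwa [L.toEffectAlgebra.compl_compl, L.toEffectAlgebra.compl_compl] at h3
    rw [← h2]; exact L.le_sup_left x y
  · intro h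
    rw [L.imp_def' x y, L.sup_eq_right h, L.toEffectAlgebra.add_compl]

lemma sup_zero (x : E) : L.sup x L.zero = x :=
  L.sup_eq_left (L.toEffectAlgebra.zero_le x)

lemma imp_zero (x : E) : L.imp x L.zero = L.compl x := by
  rw [L.imp_def' x L.zero, L.sup_zero, L.toEffectAlgebra.zero_add]

lemma imp_zero_zero : L.imp L.zero L.zero = L.one := by
  rw [L.imp_zero, L.toEffectAlgebra.compl_zero]

lemma le_imp (x y : E) : L.toEffectAlgebra.le y (L.imp x y) :=
  ⟨_, L.D_imp x y, rfl⟩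

lemma sup_eq_imp (x y : E) : L.sup x y = L.imp (L.imp x y) y := by
  rw [L.imp_def' (L.imp x y) y, L.sup_eq_left (L.le_imp x y), L.imp_def' x y]
  exact (L.toEffectAlgebra.imp_aux (L.le_sup_right x y)).2.symm

lemma inf_eq (x y : E) : L.inf x y = L.compl (L.sup (L.compl x) (L.compl y)) := by
  have h1 : L.toEffectAlgebra.le (L.compl (L.sup (L.compl x) (L.compl y))) x := by
    have h := L.toEffectAlgebra.compl_le_compl (L.le_sup_left (L.compl x) (L.compl y))
    rwa [L.toEffectAlgebra.compl_compl] at h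
  have h2 : L.toEffectAlgebra.le (L.compl (L.sup (L.compl x) (L.compl y))) y := by
    have h := L.toEffectAlgebra.compl_le_compl (L.le_sup_right (L.compl x) (L.compl y))
    rwa [L.toEffectAlgebra.compl_compl] at h
  apply L.toEffectAlgebra.le_antisymm
  · have hx' := L.toEffectAlgebra.compl_le_compl (L.inf_le_left x y)
    have hy' := L.toEffectAlgebra.compl_le_compl (L.inf_le_right x y)
    have h3 := L.sup_le _ _ _ hx' hy'
    have h4 := L.toEffectAlgebra.compl_le_compl h3
    rwa [L.toEffectAlgebra.compl_compl] at h4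
  · exact L.le_inf x y _ h1 h2

lemma compl_imp {a b : E} (h : L.toEffectAlgebra.le b (L.compl a)) :
    L.imp (L.compl a) b = L.add a b := by
  have hD : L.D b a := L.toEffectAlgebra.D_iff_le_compl.mpr h
  rw [L.imp_def' (L.compl a) b, L.sup_eq_left h, L.toEffectAlgebra.compl_compl,
    L.toEffectAlgebra.comm (L.toEffectAlgebra.comm_def hD)]

lemma imp_compl_eq_one_iff (x y : E) : L.imp x (L.compl y) = L.one ↔ L.D x y := by
  rw [L.imp_eq_one_iff]
  exact L.toEffectAlgebra.D_iff_le_compl.symm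

end LatticeEffectAlgebra

/-- A lattice effect implication algebra `(I,→,0)`.  Below, `imp x zero` plays the
role of `x'` and `imp zero zero` plays the role of `1 = 0'`. -/
structure LatticeEffectImplicationAlgebra (I : Type*) where
  imp : I → I → I
  zero : I
  /-- (i) `0→x = x→x = x→1 = 1` -/
  ax_i : ∀ x, imp zero x = imp zero zero ∧ imp x x = imp zero zero ∧
    imp x (imp zero zero) = imp zero zero
  /-- (ii) -/
  ax_ii : ∀ x y, imp x y = imp zero zero → imp y x = imp zero zero → x = y
  /-- (iii) -/
  ax_iii : ∀ x y z, imp x y = imp zero zero → imp y z = imp zero zero →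
    imp x z = imp zero zero
  /-- (iv) `x→y = 1` implies `y'→x' = 1` -/
  ax_iv : ∀ x y, imp x y = imp zero zero → imp (imp y zero) (imp x zero) = imp zero zero
  /-- (v) `x'' = x` -/
  ax_v : ∀ x, imp (imp x zero) zero = x
  /-- (vi) `x→((x→y)→y) = 1` -/
  ax_vi : ∀ x y, imp x (imp (imp x y) y) = imp zero zero
  /-- (vii) `y→((x→y)→y) = 1` -/
  ax_vii : ∀ x y, imp y (imp (imp x y) y) = imp zero zero
  /-- (viii) -/
  ax_viii : ∀ x y z, imp x z = imp zero zero → imp y z = imp zero zero →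
    imp (imp (imp x y) y) z = imp zero zero
  /-- (ix) `x→y = 1` implies `y→x = x'→y'` -/
  ax_ix : ∀ x y, imp x y = imp zero zero → imp y x = imp (imp x zero) (imp y zero)
  /-- (x), the equivalence part -/
  ax_x_iff : ∀ x y z,
    (imp x (imp y zero) = imp zero zero ∧
      imp (imp (imp x zero) y) (imp z zero) = imp zero zero) ↔
    (imp y (imp z zero) = imp zero zero ∧
      imp x (imp (imp (imp y zero) z) zero) = imp zero zero)
  /-- (x), the equality part: in this case `(x'→y)'→z = x'→(y'→z)` -/
  ax_x_eq : ∀ x y z,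
    imp x (imp y zero) = imp zero zero →
    imp (imp (imp x zero) y) (imp z zero) = imp zero zero →
    imp (imp (imp (imp x zero) y) zero) z = imp (imp x zero) (imp (imp y zero) z)
  /-- (xi) `y'→((x→y)→y)' = x→y` -/
  ax_xi : ∀ x y, imp (imp y zero) (imp (imp (imp x y) y) zero) = imp x y
  /-- (xii) `x→(y→x) = 1` -/
  ax_xii : ∀ x y, imp x (imp y x) = imp zero zero

/-- Theorem 2.4: the implication reduct `(E,→,0)` of a lattice effect algebra is a
lattice effect implication algebra, `x ≤ y` iff `x → y = 1`,
`x ∨ y = (x → y) → y` and `x ∧ y = (x' ∨ y')'`. -/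
theorem latticeEffectAlgebra_to_implicationAlgebra {E : Type*} (L : LatticeEffectAlgebra E) :
    (∃ J : LatticeEffectImplicationAlgebra E, J.imp = L.imp ∧ J.zero = L.zero) ∧
    (∀ x y : E, L.toEffectAlgebra.le x y ↔ L.imp x y = L.one) ∧
    (∀ x y : E, L.sup x y = L.imp (L.imp x y) y) ∧
    (∀ x y : E, L.inf x y = L.compl (L.sup (L.compl x) (L.compl y))) := by
  have hone := L.imp_zero_zero
  refine ⟨⟨⟨L.imp, L.zero,
      fun x => by
        refine ⟨?_, ?_, ?_⟩
        · rw [hone, L.imp_eq_one_iff]; exact L.toEffectAlgebra.zero_le x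
        · rw [hone, L.imp_eq_one_iff]; exact L.toEffectAlgebra.le_refl x
        · rw [hone, L.imp_eq_one_iff]; exact L.toEffectAlgebra.le_one x,
      fun x y h h' => by
        rw [hone] at h h'
        exact L.toEffectAlgebra.le_antisymm ((L.imp_eq_one_iff x y).mp h)
          ((L.imp_eq_one_iff y x).mp h'),
      fun x y z h h' => by
        rw [hone] at h h' ⊢
        rw [L.imp_eq_one_iff]
        exact L.toEffectAlgebra.le_trans ((L.imp_eq_one_iff x y).mp h)
          ((L.imp_eq_one_iff y z).mp h'),
      fun x y h => by
        rw [hone] at h ⊢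
        rw [L.imp_zero, L.imp_zero, L.imp_eq_one_iff]
        exact L.toEffectAlgebra.compl_le_compl ((L.imp_eq_one_iff x y).mp h),
      fun x => by
        rw [L.imp_zero, L.imp_zero, L.toEffectAlgebra.compl_compl],
      fun x y => by
        rw [hone, ← L.sup_eq_imp, L.imp_eq_one_iff]
        exact L.le_sup_left x y,
      fun x y => by
        rw [hone, ← L.sup_eq_imp, L.imp_eq_one_iff]
        exact L.le_sup_right x y,
      fun x y z h h' => by
        rw [hone] at h h' ⊢
        rw [← L.sup_eq_imp, L.imp_eq_one_iff]
        exact L.sup_le x y z ((L.imp_eq_one_iff x z).mp h) ((L.imp_eq_one_iff y z).mp h'),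
      fun x y h => by
        rw [hone] at h
        have hxy := (L.imp_eq_one_iff x y).mp h
        have hD : L.D x (L.compl y) := L.toEffectAlgebra.D_iff_le_compl.mpr
          (by rw [L.toEffectAlgebra.compl_compl]; exact hxy)
        rw [L.imp_zero, L.imp_zero, L.imp_def' y x, L.imp_def' (L.compl x) (L.compl y),
          L.sup_eq_left hxy, L.sup_eq_left (L.toEffectAlgebra.compl_le_compl hxy),
          L.toEffectAlgebra.compl_compl, L.toEffectAlgebra.comm hD],
      fun x y z => by
        simp only [hone]
        simp only [L.imp_zero]
        constructor
        · rintro ⟨h1, h2⟩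
          have hxy : L.D x y := (L.imp_compl_eq_one_iff x y).mp h1
          have hyx' : L.toEffectAlgebra.le y (L.compl x) :=
            L.toEffectAlgebra.D_iff_le_compl.mp (L.toEffectAlgebra.comm_def hxy)
          rw [L.compl_imp hyx'] at h2
          have h2' : L.D (L.add x y) z := (L.imp_compl_eq_one_iff _ z).mp h2
          obtain ⟨hyz, hxyz⟩ := (L.toEffectAlgebra.assoc_def x y z).mp ⟨hxy, h2'⟩
          refine ⟨(L.imp_compl_eq_one_iff y z).mpr hyz, ?_⟩
          have hzy' : L.toEffectAlgebra.le z (L.compl y) :=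
            L.toEffectAlgebra.D_iff_le_compl.mp (L.toEffectAlgebra.comm_def hyz)
          rw [L.compl_imp hzy']
          exact (L.imp_compl_eq_one_iff x _).mpr hxyz
        · rintro ⟨h1, h2⟩
          have hyz : L.D y z := (L.imp_compl_eq_one_iff y z).mp h1
          have hzy' : L.toEffectAlgebra.le z (L.compl y) :=
            L.toEffectAlgebra.D_iff_le_compl.mp (L.toEffectAlgebra.comm_def hyz)
          rw [L.compl_imp hzy'] at h2
          have h2' : L.D x (L.add y z) := (L.imp_compl_eq_one_iff x _).mp h2
          obtain ⟨hxy, hxyz⟩ := (L.toEffectAlgebra.assoc_def x y z).mpr ⟨hyz, h2'⟩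
          refine ⟨(L.imp_compl_eq_one_iff x y).mpr hxy, ?_⟩
          have hyx' : L.toEffectAlgebra.le y (L.compl x) :=
            L.toEffectAlgebra.D_iff_le_compl.mp (L.toEffectAlgebra.comm_def hxy)
          rw [L.compl_imp hyx']
          exact (L.imp_compl_eq_one_iff _ z).mpr hxyz,
      fun x y z h1 h2 => by
        simp only [hone] at h1 h2
        simp only [L.imp_zero] at h1 h2 ⊢
        have hxy : L.D x y := (L.imp_compl_eq_one_iff x y).mp h1
        have hyx' : L.toEffectAlgebra.le y (L.compl x) :=
          L.toEffectAlgebra.D_iff_le_compl.mp (L.toEffectAlgebra.comm_def hxy)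
        rw [L.compl_imp hyx'] at h2 ⊢
        have hD2 : L.D (L.add x y) z := (L.imp_compl_eq_one_iff _ z).mp h2
        obtain ⟨hyz, hxyz⟩ := (L.toEffectAlgebra.assoc_def x y z).mp ⟨hxy, hD2⟩
        have hz' : L.toEffectAlgebra.le z (L.compl (L.add x y)) :=
          L.toEffectAlgebra.D_iff_le_compl.mp (L.toEffectAlgebra.comm_def hD2)
        have hzy' : L.toEffectAlgebra.le z (L.compl y) :=
          L.toEffectAlgebra.D_iff_le_compl.mp (L.toEffectAlgebra.comm_def hyz)
        have hyzx : L.toEffectAlgebra.le (L.add y z) (L.compl x) :=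
          L.toEffectAlgebra.D_iff_le_compl.mp (L.toEffectAlgebra.comm_def hxyz)
        rw [L.compl_imp hz', L.compl_imp hzy', L.compl_imp hyzx]
        exact L.toEffectAlgebra.assoc x y z hxy hD2,
      fun x y => by
        rw [L.imp_zero y, L.imp_zero (L.imp (L.imp x y) y), ← L.sup_eq_imp,
          L.compl_imp (L.toEffectAlgebra.compl_le_compl (L.le_sup_right x y))]
        exact (L.imp_def' x y).symm,
      fun x y => by
        rw [hone, L.imp_eq_one_iff]
        exact L.le_imp y x⟩, rfl, rfl⟩,
    fun x y => (L.imp_eq_one_iff x y).symm, L.sup_eq_imp, L.inf_eq⟩
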